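/- arXiv:2311.04774 — 7 statements merged into one kernel-verified Lean document; each statement's English description precedes it below -/
import Mathlib

section
/- Suppose functions δ, d, α, α̃, Q, Z, p, γ on appropriate domains satisfy, for all s, s̃ in S: d(h(s), h(s̃)) + α(h(s)) + α̃(h(s̃)) = d(s, s̃) − log Q(s̃) + log Z(s) + log p(s̃) + γ(s), where d is symmetric and satisfies d(u,u) = 0 for all u. Then d(h(s), h(s̃)) = d(s, s̃) for all s, s̃. -/
/-! Subtracting the diagonal instances `(s, s)` and `(t, t)` of the identity from the sum of the
instances `(s, t)` and `(t, s)` cancels every term depending on one point only; since both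
distances are symmetric and vanish on the diagonal, what remains is
`2 d(h s, h t) = 2 d(s, t)`. -/

theorem eq_zero_of_symm_of_diag_of_eq_add {X : Type*} {S : Set X} {D : X → X → ℝ}
    {f g : X → ℝ} (hsymm : ∀ x ∈ S, ∀ y ∈ S, D x y = D y x) (hdiag : ∀ x ∈ S, D x x = 0)
    (hsplit : ∀ x ∈ S, ∀ y ∈ S, D x y = f x + g y) :
    ∀ x ∈ S, ∀ y ∈ S, D x y = 0 := by
  intro x hx y hy
  linarith [hsymm x hx y hy, hdiag x hx, hdiag y hy, hsplit x hx y hy, hsplit y hy x hx,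
    hsplit x hx x hx, hsplit y hy y hy]

theorem distance_preservation_from_critic_identity_general {n : ℕ}
    (S : Set (Fin n → ℝ)) (h : (Fin n → ℝ) → (Fin n → ℝ))
    (d : (Fin n → ℝ) → (Fin n → ℝ) → ℝ)
    (α αt γ : (Fin n → ℝ) → ℝ) (Q Z p : (Fin n → ℝ) → ℝ)
    (hdsymm : ∀ u v, d u v = d v u) (hd0 : ∀ u, d u u = 0)
    (heq : ∀ s ∈ S, ∀ t ∈ S,
      d (h s) (h t) + α (h s) + αt (h t)
        = d s t - Real.log (Q t) + Real.log (Z s) + Real.log (p t) + γ s) :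
    ∀ s ∈ S, ∀ t ∈ S, d (h s) (h t) = d s t := by
  have hzero := eq_zero_of_symm_of_diag_of_eq_add (D := fun s t => d (h s) (h t) - d s t)
    (f := fun s => Real.log (Z s) + γ s - α (h s))
    (g := fun t => Real.log (p t) - Real.log (Q t) - αt (h t))
    (fun s _ t _ => by simp only [hdsymm (h s), hdsymm s])
    (fun s _ => by simp only [hd0, sub_self])
    (fun s hs t ht => by linarith [heq s hs t ht])
  exact fun s hs t ht => sub_eq_zero.mp (hzero s hs t ht)

/-- If for all s, s̃ in S,
`d(h(s),h(s̃)) + α(h(s)) + α̃(h(s̃)) = d(s,s̃) − log Q(s̃) + log Z(s) + log p(s̃) + γ(s)`,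
with `d` symmetric and vanishing on the diagonal, then `d(h(s),h(s̃)) = d(s,s̃)`. -/
theorem distance_preservation_from_critic_identity {n : ℕ}
    (S : Set (Fin n → ℝ)) (h : (Fin n → ℝ) → (Fin n → ℝ))
    (d : (Fin n → ℝ) → (Fin n → ℝ) → ℝ)
    (α αt γ : (Fin n → ℝ) → ℝ) (Q Z p : (Fin n → ℝ) → ℝ)
    (hQ : ∀ s, 0 < Q s) (hZ : ∀ s, 0 < Z s) (hp : ∀ s, 0 < p s)
    (hdsymm : ∀ u v, d u v = d v u) (hd0 : ∀ u, d u u = 0)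
    (heq : ∀ s ∈ S, ∀ t ∈ S,
      d (h s) (h t) + α (h s) + αt (h t)
        = d s t - Real.log (Q t) + Real.log (Z s) + Real.log (p t) + γ s) :
    ∀ s ∈ S, ∀ t ∈ S, d (h s) (h t) = d s t :=
  distance_preservation_from_critic_identity_general S h d α αt γ Q Z p hdsymm hd0 heq
end

section
/- Let A be an invertible n×n real matrix such that ‖Ax‖_p = ‖x‖_p for all x ∈ ℝⁿ, where 0 < p < 1 and ‖x‖_p^p = Σᵢ |xᵢ|^p. Then A is a generalized permutation matrix: each row and each column of A has exactly one nonzero entry. -/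
open Finset Real

private lemma strict_subadd {p : ℝ} (hp0 : 0 < p) (hp1 : p < 1) {x y : ℝ}
    (hx : 0 < x) (hy : 0 < y) : (x + y) ^ p < x ^ p + y ^ p := by
  have hxy : 0 < x + y := by linarith
  have hsplit : ∀ z : ℝ, 0 < z → z ^ p = z * z ^ (p - 1) := by
    intro z hz
    conv_lhs => rw [show p = 1 + (p - 1) by ring]
    rw [Real.rpow_add hz, Real.rpow_one]
  have h1 : (x + y) ^ p = x * (x + y) ^ (p - 1) + y * (x + y) ^ (p - 1) := by
    rw [hsplit _ hxy]; ring
  have hx' : x * (x + y) ^ (p - 1) < x * x ^ (p - 1) :=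
    mul_lt_mul_of_pos_left
      (Real.rpow_lt_rpow_of_neg hx (by linarith) (by linarith)) hx
  have hy' : y * (x + y) ^ (p - 1) < y * y ^ (p - 1) :=
    mul_lt_mul_of_pos_left
      (Real.rpow_lt_rpow_of_neg hy (by linarith) (by linarith)) hy
  rw [h1, hsplit _ hx, hsplit _ hy]
  linarith

private lemma abs_rpow_add_le {p : ℝ} (hp0 : 0 < p) (hp1 : p < 1) (a b : ℝ) :
    |a + b| ^ p ≤ |a| ^ p + |b| ^ p := by
  rcases eq_or_ne a 0 with rfl | ha
  · simp [Real.zero_rpow hp0.ne']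
  rcases eq_or_ne b 0 with rfl | hb
  · simp [Real.zero_rpow hp0.ne']
  have h1 : |a + b| ^ p ≤ (|a| + |b|) ^ p :=
    Real.rpow_le_rpow (abs_nonneg _) (abs_add_le a b) hp0.le
  exact h1.trans_lt (strict_subadd hp0 hp1 (abs_pos.2 ha) (abs_pos.2 hb)) |>.le

private lemma abs_rpow_add_lt {p : ℝ} (hp0 : 0 < p) (hp1 : p < 1) {a b : ℝ}
    (ha : a ≠ 0) (hb : b ≠ 0) : |a + b| ^ p < |a| ^ p + |b| ^ p := by
  have h1 : |a + b| ^ p ≤ (|a| + |b|) ^ p :=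
    Real.rpow_le_rpow (abs_nonneg _) (abs_add_le a b) hp0.le
  exact h1.trans_lt (strict_subadd hp0 hp1 (abs_pos.2 ha) (abs_pos.2 hb))

/-- An invertible matrix preserving the ℓ^p functional for `0 < p < 1` is a
generalized permutation matrix: every row and every column has exactly one
nonzero entry. -/
theorem lp_isometry_is_generalized_permutation {n : ℕ}
    (A : Matrix (Fin n) (Fin n) ℝ) (hA : IsUnit A)
    (p : ℝ) (hp0 : 0 < p) (hp1 : p < 1)
    (hiso : ∀ x : Fin n → ℝ, ∑ i, |A.mulVec x i| ^ p = ∑ i, |x i| ^ p) :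
    (∀ i : Fin n, ∃! j : Fin n, A i j ≠ 0) ∧
    (∀ j : Fin n, ∃! i : Fin n, A i j ≠ 0) := by
  classical
  have hdet : IsUnit A.det := (Matrix.isUnit_iff_isUnit_det A).mp hA
  -- sum over a single basis vector
  have hsingle : ∀ j : Fin n, ∑ i, |A i j| ^ p = 1 := by
    intro j
    have h := hiso (Pi.single j 1)
    simp only [Matrix.mulVec_single_one, Matrix.col_apply] at h
    rw [h, Finset.sum_eq_single j]
    · simp
    · intro m _ hm
      simp [Pi.single_apply, hm, Real.zero_rpow hp0.ne']
    · simp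
  -- each row has at most one nonzero entry
  have hrow_amo : ∀ i : Fin n, ∀ j k : Fin n, j ≠ k → A i j ≠ 0 → A i k = 0 := by
    intro i0 j k hjk haj
    by_contra hak
    have hx : ∀ i, A.mulVec (Pi.single j 1 + Pi.single k 1) i = A i j + A i k := by
      intro i
      simp [Matrix.mulVec_add]
    have hrhs : ∑ m, |(Pi.single j 1 + Pi.single k 1 : Fin n → ℝ) m| ^ p
        = ∑ m, (|(Pi.single j 1 : Fin n → ℝ) m| ^ p
              + |(Pi.single k 1 : Fin n → ℝ) m| ^ p) := by
      apply Finset.sum_congr rfl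
      intro m _
      rcases eq_or_ne m j with rfl | hmj
      · simp [Pi.single_apply, Ne.symm hjk, Real.zero_rpow hp0.ne']
      · simp [Pi.single_apply, hmj, Real.zero_rpow hp0.ne']
    have hs1 : ∀ l : Fin n, ∑ m, |(Pi.single l 1 : Fin n → ℝ) m| ^ p = 1 := by
      intro l
      rw [Finset.sum_eq_single l]
      · simp
      · intro m _ hm; simp [Pi.single_apply, hm, Real.zero_rpow hp0.ne']
      · simp
    have heq : ∑ i, |A i j + A i k| ^ p = ∑ i, (|A i j| ^ p + |A i k| ^ p) := by
      have h := hiso (Pi.single j 1 + Pi.single k 1)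
      simp only [hx] at h
      rw [h, hrhs, Finset.sum_add_distrib, hs1, hs1,
        Finset.sum_add_distrib, hsingle, hsingle]
    have hlt : ∑ i, |A i j + A i k| ^ p < ∑ i, (|A i j| ^ p + |A i k| ^ p) := by
      apply Finset.sum_lt_sum
      · intro i _; exact abs_rpow_add_le hp0 hp1 _ _
      · exact ⟨i0, Finset.mem_univ _, abs_rpow_add_lt hp0 hp1 haj hak⟩
    exact absurd heq hlt.ne
  -- rows are nonzero
  have hrow_ex : ∀ i : Fin n, ∃ j, A i j ≠ 0 := by
    intro i
    by_contra h
    push_neg at h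
    have : A.det = 0 := Matrix.det_eq_zero_of_row_eq_zero i h
    exact hdet.ne_zero this
  -- columns are nonzero
  have hcol_ex : ∀ j : Fin n, ∃ i, A i j ≠ 0 := by
    intro j
    by_contra h
    push_neg at h
    have : A.det = 0 := Matrix.det_eq_zero_of_column_eq_zero j h
    exact hdet.ne_zero this
  have hrowEU : ∀ i : Fin n, ∃! j : Fin n, A i j ≠ 0 := by
    intro i
    obtain ⟨j, hj⟩ := hrow_ex i
    refine ⟨j, hj, fun k hk => ?_⟩
    by_contra hkj
    exact hk (hrow_amo i j k (Ne.symm hkj) hj)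
  refine ⟨hrowEU, ?_⟩
  -- define the map row → unique column
  let f : Fin n → Fin n := fun i => (hrowEU i).choose
  have hf : ∀ i, A i (f i) ≠ 0 ∧ ∀ k, A i k ≠ 0 → k = f i := fun i =>
    ⟨(hrowEU i).choose_spec.1, fun k hk => (hrowEU i).choose_spec.2 k hk⟩
  have hfsurj : Function.Surjective f := by
    intro j
    obtain ⟨i, hi⟩ := hcol_ex j
    exact ⟨i, ((hf i).2 j hi).symm⟩
  have hfinj : Function.Injective f := Finite.injective_iff_surjective.mpr hfsurj
  intro j
  obtain ⟨i, hi⟩ := hcol_ex j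
  refine ⟨i, hi, fun i' hi' => ?_⟩
  have h1 : f i = j := ((hf i).2 j hi).symm
  have h2 : f i' = j := ((hf i').2 j hi').symm
  exact hfinj (h2.trans h1.symm)
end

section
/- Let d(x,y) = Σᵢ dᵢ(|xᵢ − yᵢ|) on ℝⁿ where each dᵢ : [0,∞) → [0,∞) is continuous, strictly increasing, and dᵢ(0) = 0. Fix r > 0 and let B_r = {x ∈ ℝⁿ : d(0,x) ≤ r}. Then for each standard basis vector eᵢ and each aᵢ with d(0, aᵢ eᵢ) = r, the point aᵢ eᵢ is a 2-extremal point of B_r; i.e., if u, u' ∈ B_r and u + u' = 2 aᵢ eᵢ, then u = u' = aᵢ eᵢ. -/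
/-! Membership in `B_r` bounds the `i`-th term: `dᵢ(|uᵢ|) ≤ r = dᵢ(|a|)`, so `|uᵢ|, |u'ᵢ| ≤ |a|`
by monotonicity. Together with `uᵢ + u'ᵢ = 2a` this forces `uᵢ = u'ᵢ = a`; then the `i`-th term
alone uses up the whole budget `r`, so every other (nonnegative) term vanishes, and strict
monotonicity turns `dⱼ(|uⱼ|) = 0` into `uⱼ = 0`. -/

open Set

namespace StrictMonoOn

variable {f : ℝ → ℝ}

lemma map_nonneg_of_map_zero (hf : StrictMonoOn f (Ici 0)) (h0 : f 0 = 0) {t : ℝ}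
    (ht : 0 ≤ t) : 0 ≤ f t :=
  h0 ▸ hf.monotoneOn self_mem_Ici ht ht

lemma eq_zero_of_map_eq_zero (hf : StrictMonoOn f (Ici 0)) (h0 : f 0 = 0) {t : ℝ}
    (ht : 0 ≤ t) (hft : f t = 0) : t = 0 :=
  hf.injOn ht self_mem_Ici (hft.trans h0.symm)

end StrictMonoOn

lemma eq_and_eq_of_abs_le_of_add_eq_two_mul {x y a : ℝ} (hx : |x| ≤ |a|) (hy : |y| ≤ |a|)
    (h : x + y = 2 * a) : x = a ∧ y = a := by
  rcases le_total 0 a with ha | ha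
  · rw [abs_of_nonneg ha] at hx hy
    constructor <;> linarith [le_abs_self x, le_abs_self y]
  · rw [abs_of_nonpos ha] at hx hy
    constructor <;> linarith [neg_abs_le x, neg_abs_le y]

section Separable

variable {ι : Type*} [Fintype ι] {f : ι → ℝ → ℝ}

lemma sum_map_abs_smul_single [DecidableEq ι] (h0 : ∀ j, f j 0 = 0) (i : ι) (a : ℝ) :
    ∑ j, f j |(a • Pi.single i 1 : ι → ℝ) j| = f i |a| := by
  rw [Finset.sum_eq_single i (fun j _ hj => by simp [hj, h0 j]) (by simp)]
  simp

variable (hmono : ∀ j, StrictMonoOn (f j) (Ici 0)) (h0 : ∀ j, f j 0 = 0)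
include hmono h0

lemma abs_apply_le_of_sum_le {v : ι → ℝ} {i : ι} {a : ℝ} (hv : ∑ j, f j |v j| ≤ f i |a|) :
    |v i| ≤ |a| := by
  have hi : f i |v i| ≤ ∑ j, f j |v j| :=
    Finset.single_le_sum (fun j _ => (hmono j).map_nonneg_of_map_zero (h0 j) (abs_nonneg _))
      (Finset.mem_univ i)
  exact ((hmono i).le_iff_le (abs_nonneg (v i)) (abs_nonneg a)).1 (hi.trans hv)

lemma eq_smul_single_of_sum_le [DecidableEq ι] {v : ι → ℝ} {i : ι} {a : ℝ}
    (hv : ∑ j, f j |v j| ≤ f i |a|) (hvi : v i = a) : v = a • Pi.single i 1 := by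
  have hnonneg : ∀ j ∈ Finset.univ.erase i, 0 ≤ f j |v j| :=
    fun j _ => (hmono j).map_nonneg_of_map_zero (h0 j) (abs_nonneg _)
  have hrest : ∑ j ∈ Finset.univ.erase i, f j |v j| = 0 := by
    rw [← Finset.add_sum_erase _ _ (Finset.mem_univ i), hvi] at hv
    exact le_antisymm (by linarith) (Finset.sum_nonneg hnonneg)
  funext j
  by_cases hj : j = i
  · subst hj
    simp [hvi]
  · have hfj := (Finset.sum_eq_zero_iff_of_nonneg hnonneg).1 hrest j (by simp [hj])
    simpa [hj] using (hmono j).eq_zero_of_map_eq_zero (h0 j) (abs_nonneg _) hfj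

end Separable

theorem axis_points_are_two_extremal_general {n : ℕ}
    (di : Fin n → ℝ → ℝ)
    (hmono : ∀ i, StrictMonoOn (di i) (Set.Ici 0))
    (h0 : ∀ i, di i 0 = 0)
    (d : (Fin n → ℝ) → (Fin n → ℝ) → ℝ)
    (hd : ∀ x y, d x y = ∑ i, di i |x i - y i|)
    (r : ℝ)
    (i : Fin n) (a : ℝ)
    (ha : d 0 (a • (Pi.single i 1 : Fin n → ℝ)) = r) :
    ∀ u u' : Fin n → ℝ, d 0 u ≤ r → d 0 u' ≤ r →
      u + u' = (2 : ℝ) • (a • (Pi.single i 1 : Fin n → ℝ)) →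
      u = a • (Pi.single i 1 : Fin n → ℝ) ∧
      u' = a • (Pi.single i 1 : Fin n → ℝ) := by
  intro u u' hu hu' hsum
  have hd0 : ∀ v, d 0 v = ∑ j, di j |v j| := fun v => by simp [hd]
  have hr : r = di i |a| := by rw [← ha, hd0, sum_map_abs_smul_single h0]
  rw [hd0, hr] at hu hu'
  have hsum_i : u i + u' i = 2 * a := by simpa using congrFun hsum i
  obtain ⟨hui, hu'i⟩ := eq_and_eq_of_abs_le_of_add_eq_two_mul
    (abs_apply_le_of_sum_le hmono h0 hu) (abs_apply_le_of_sum_le hmono h0 hu') hsum_i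
  exact ⟨eq_smul_single_of_sum_le hmono h0 hu hui, eq_smul_single_of_sum_le hmono h0 hu' hu'i⟩

/-- For the separable distance `d(x,y) = ∑ᵢ dᵢ(|xᵢ − yᵢ|)` built from continuous,
strictly increasing `dᵢ` with `dᵢ(0) = 0`, every point `aᵢ eᵢ` on the sphere
`d(0, aᵢ eᵢ) = r` along a coordinate axis is a 2-extremal point of the ball
`B_r = {x : d(0,x) ≤ r}`. -/
theorem axis_points_are_two_extremal {n : ℕ}
    (di : Fin n → ℝ → ℝ)
    (hcont : ∀ i, ContinuousOn (di i) (Set.Ici 0))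
    (hmono : ∀ i, StrictMonoOn (di i) (Set.Ici 0))
    (h0 : ∀ i, di i 0 = 0)
    (d : (Fin n → ℝ) → (Fin n → ℝ) → ℝ)
    (hd : ∀ x y, d x y = ∑ i, di i |x i - y i|)
    (r : ℝ) (hr : 0 < r)
    (i : Fin n) (a : ℝ)
    (ha : d 0 (a • (Pi.single i 1 : Fin n → ℝ)) = r) :
    ∀ u u' : Fin n → ℝ, d 0 u ≤ r → d 0 u' ≤ r →
      u + u' = (2 : ℝ) • (a • (Pi.single i 1 : Fin n → ℝ)) →
      u = a • (Pi.single i 1 : Fin n → ℝ) ∧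
      u' = a • (Pi.single i 1 : Fin n → ℝ) :=
  axis_points_are_two_extremal_general di hmono h0 d hd r i a ha
end

section
/- Let h : ℝⁿ → ℝⁿ satisfy d(h(x), h(y)) = d(x, y) for all x, y, where d(x,y) = Σᵢ dᵢ(|xᵢ − yᵢ|) with each dᵢ continuous, strictly increasing, dᵢ(0)=0. If additionally h(s + a eᵢ) = h(s) + a (h(s + eᵢ) − h(s)) for all s, a, i (h maps axis-parallel lines to lines affinely), then φ(s) = h(s) − h(0) satisfies φ(Σᵢ aᵢ eᵢ) = Σᵢ aᵢ φ(eᵢ), i.e., h is affine. -/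
/-!
Fix base points `s`, `t` and a coordinate direction `eᵢ`. Both points move along parallel
axis lines at the same speed, so `d(h(s + a eᵢ), h(t + a eᵢ)) = d(s, t)` for every `a`. By the
line hypothesis the difference `h(s + a eᵢ) − h(t + a eᵢ)` is `c + a w`, where `w` is the
difference of the two increments `h(s + eᵢ) − h(s)` and `h(t + eᵢ) − h(t)`. If `w ≠ 0`, then
`a ↦ ∑ⱼ dⱼ(|cⱼ + a wⱼ|)` is strictly increasing for large `a`, contradicting constancy.
Hence the increment along `eᵢ` does not depend on the base point, and `h` is affine by
moving one coordinate at a time.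
-/

open Set Finset

lemma abs_add_mul_eq_of_abs_div_le {c w a : ℝ} (hw : w ≠ 0) (ha : |c / w| ≤ a) :
    |c + a * w| = |w| * (a + c / w) := by
  have hpos : 0 ≤ a + c / w := by linarith [neg_abs_le (c / w)]
  rw [show c + a * w = w * (a + c / w) by field_simp; ring, abs_mul, abs_of_nonneg hpos]

lemma strictMonoOn_abs_add_mul {c w : ℝ} (hw : w ≠ 0) :
    StrictMonoOn (fun a => |c + a * w|) (Ici |c / w|) := by
  intro a ha b hb hab
  simp only [abs_add_mul_eq_of_abs_div_le hw ha, abs_add_mul_eq_of_abs_div_le hw hb]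
  gcongr

lemma monotoneOn_abs_add_mul (c w : ℝ) : MonotoneOn (fun a => |c + a * w|) (Ici |c / w|) := by
  rcases eq_or_ne w 0 with rfl | hw
  · simp [MonotoneOn]
  · exact (strictMonoOn_abs_add_mul hw).monotoneOn

lemma eq_zero_of_forall_sum_comp_abs_add_mul_eq {ι : Type*} [Fintype ι] {f : ι → ℝ → ℝ}
    (hf : ∀ j, StrictMonoOn (f j) (Ici 0)) {c w : ι → ℝ} {K : ℝ}
    (hconst : ∀ a, ∑ j, f j |c j + a * w j| = K) : w = 0 := by
  by_contra hw
  obtain ⟨j₀, hj₀⟩ := Function.ne_iff.mp hw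
  -- Terms with `w j = 0` (where `c j / w j = 0`) are constant in `a`, so one bound serves all `j`.
  set T := ∑ j, |c j / w j|
  have hT : ∀ j, T ∈ Ici |c j / w j| := fun j =>
    single_le_sum (fun k _ => abs_nonneg (c k / w k)) (mem_univ j)
  have hT₁ : ∀ j, T + 1 ∈ Ici |c j / w j| := fun j =>
    mem_Ici.mpr (le_add_of_le_of_nonneg (hT j) zero_le_one)
  have habs : ∀ j, MapsTo (fun a => |c j + a * w j|) (Ici |c j / w j|) (Ici 0) :=
    fun j _ _ => mem_Ici.mpr (abs_nonneg _)
  have hlt : ∑ j, f j |c j + T * w j| < ∑ j, f j |c j + (T + 1) * w j| := by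
    refine sum_lt_sum (fun j _ => ?_) ⟨j₀, mem_univ j₀, ?_⟩
    · exact ((hf j).monotoneOn.comp (monotoneOn_abs_add_mul _ _) (habs j)) (hT j) (hT₁ j)
        (by linarith)
    · exact ((hf j₀).comp (strictMonoOn_abs_add_mul hj₀) (habs j₀)) (hT j₀) (hT₁ j₀)
        (by linarith)
  linarith [hconst T, hconst (T + 1)]

lemma sub_eq_sub_of_isometry_of_affine_on_lines {ι : Type*} [Fintype ι] {f : ι → ℝ → ℝ}
    (hf : ∀ j, StrictMonoOn (f j) (Ici 0)) {h : (ι → ℝ) → ι → ℝ}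
    (hiso : ∀ x y, ∑ j, f j |h x j - h y j| = ∑ j, f j |x j - y j|) {v : ι → ℝ}
    (hline : ∀ s (a : ℝ), h (s + a • v) = h s + a • (h (s + v) - h s)) (s t : ι → ℝ) :
    h (s + v) - h s = h (t + v) - h t := by
  set w := (h (s + v) - h s) - (h (t + v) - h t)
  have hconst : ∀ a : ℝ, ∑ j, f j |(h s - h t) j + a * w j| = ∑ j, f j |s j - t j| := by
    intro a
    have hdiff : h (s + a • v) - h (t + a • v) = (h s - h t) + a • w := by
      rw [hline, hline]
      module
    calc ∑ j, f j |(h s - h t) j + a * w j|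
        = ∑ j, f j |h (s + a • v) j - h (t + a • v) j| := by
          simp only [← Pi.sub_apply (h (s + a • v)), hdiff, Pi.add_apply, Pi.smul_apply,
            smul_eq_mul]
      _ = ∑ j, f j |s j - t j| := by simp only [hiso, Pi.add_apply, add_sub_add_right_eq_sub]
  exact sub_eq_zero.mp (eq_zero_of_forall_sum_comp_abs_add_mul_eq hf hconst)

lemma map_sum_smul_of_map_add_smul {ι E F : Type*} [AddCommGroup E] [Module ℝ E]
    [AddCommGroup F] [Module ℝ F] {h : E → F} {v : ι → E} {u : ι → F}
    (hstep : ∀ s (a : ℝ) i, h (s + a • v i) = h s + a • u i) (a : ι → ℝ) (S : Finset ι) :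
    h (∑ i ∈ S, a i • v i) = h 0 + ∑ i ∈ S, a i • u i := by
  classical
  induction S using Finset.induction_on with
  | empty => simp
  | insert j S hj ih =>
    rw [sum_insert hj, sum_insert hj, add_comm, hstep, ih, add_assoc, add_comm (a j • u j)]

theorem distance_preserving_line_affine_is_affine_general {n : ℕ}
    (di : Fin n → ℝ → ℝ)
    (hmono : ∀ i, StrictMonoOn (di i) (Set.Ici 0))
    (d : (Fin n → ℝ) → (Fin n → ℝ) → ℝ)
    (hd : ∀ x y, d x y = ∑ i, di i |x i - y i|)
    (h : (Fin n → ℝ) → (Fin n → ℝ))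
    (hiso : ∀ x y, d (h x) (h y) = d x y)
    (hline : ∀ (s : Fin n → ℝ) (a : ℝ) (i : Fin n),
      h (s + a • (Pi.single i 1 : Fin n → ℝ))
        = h s + a • (h (s + (Pi.single i 1 : Fin n → ℝ)) - h s)) :
    ∀ a : Fin n → ℝ,
      h (∑ i, a i • (Pi.single i 1 : Fin n → ℝ)) - h 0
        = ∑ i, a i • (h (Pi.single i 1 : Fin n → ℝ) - h 0) := by
  have hiso' : ∀ x y, ∑ i, di i |h x i - h y i| = ∑ i, di i |x i - y i| := fun x y => by
    rw [← hd, ← hd, hiso]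
  have hstep : ∀ s (a : ℝ) i, h (s + a • (Pi.single i 1 : Fin n → ℝ))
      = h s + a • (h (Pi.single i 1 : Fin n → ℝ) - h 0) := by
    intro s a i
    rw [hline, sub_eq_sub_of_isometry_of_affine_on_lines hmono hiso' (hline · · i) s 0, zero_add]
  intro a
  rw [map_sum_smul_of_map_add_smul hstep a univ, add_sub_cancel_left]

/-- If `h` preserves the separable distance `d(x,y) = ∑ᵢ dᵢ(|xᵢ − yᵢ|)` and maps
axis-parallel lines affinely, then `φ(s) = h(s) − h(0)` is linear on the
standard basis: `φ(∑ᵢ aᵢ eᵢ) = ∑ᵢ aᵢ φ(eᵢ)`, i.e. `h` is affine. -/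
theorem distance_preserving_line_affine_is_affine {n : ℕ}
    (di : Fin n → ℝ → ℝ)
    (hcont : ∀ i, ContinuousOn (di i) (Set.Ici 0))
    (hmono : ∀ i, StrictMonoOn (di i) (Set.Ici 0))
    (h0 : ∀ i, di i 0 = 0)
    (d : (Fin n → ℝ) → (Fin n → ℝ) → ℝ)
    (hd : ∀ x y, d x y = ∑ i, di i |x i - y i|)
    (h : (Fin n → ℝ) → (Fin n → ℝ))
    (hiso : ∀ x y, d (h x) (h y) = d x y)
    (hline : ∀ (s : Fin n → ℝ) (a : ℝ) (i : Fin n),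
      h (s + a • (Pi.single i 1 : Fin n → ℝ))
        = h s + a • (h (s + (Pi.single i 1 : Fin n → ℝ)) - h s)) :
    ∀ a : Fin n → ℝ,
      h (∑ i, a i • (Pi.single i 1 : Fin n → ℝ)) - h 0
        = ∑ i, a i • (h (Pi.single i 1 : Fin n → ℝ) - h 0) :=
  distance_preserving_line_affine_is_affine_general di hmono d hd h hiso hline
end

section
/- Let S ⊆ ℝⁿ be open and connected, and let h : S → ℝⁿ satisfy ‖h(s) − h(t)‖ = ‖s − t‖ for all s, t ∈ S, where ‖·‖ is a norm on ℝⁿ induced by an inner product (Euclidean norm). Then h extends uniquely to an affine isometry of ℝⁿ; in particular h(s) = A s + b for an orthogonal matrix A and vector b. -/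
open Matrix

section Aux
variable {n : ℕ}

lemma sum_sq_eq_dot (x y : Fin n → ℝ) :
    ∑ i, (x i - y i) ^ 2 = (x - y) ⬝ᵥ (x - y) := by
  simp [dotProduct, Pi.sub_apply, sq]

lemma dot_expand (a b c : Fin n → ℝ) : (a - b) ⬝ᵥ (a - b)
    = (a - c) ⬝ᵥ (a - c) + (b - c) ⬝ᵥ (b - c) - 2 * ((a - c) ⬝ᵥ (b - c)) := by
  simp only [dotProduct, Pi.sub_apply, Finset.mul_sum, ← Finset.sum_add_distrib,
    ← Finset.sum_sub_distrib]
  exact Finset.sum_congr rfl fun i _ => by ring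

lemma polar {S : Set (Fin n → ℝ)} {h : (Fin n → ℝ) → (Fin n → ℝ)}
    (hpres : ∀ s ∈ S, ∀ t ∈ S,
      ∑ i, (h s i - h t i) ^ 2 = ∑ i, (s i - t i) ^ 2)
    {s t u : Fin n → ℝ} (hs : s ∈ S) (ht : t ∈ S) (hu : u ∈ S) :
    (h s - h u) ⬝ᵥ (h t - h u) = (s - u) ⬝ᵥ (t - u) := by
  have e1 := hpres s hs u hu
  have e2 := hpres t ht u hu
  have e3 := hpres s hs t ht
  rw [sum_sq_eq_dot, sum_sq_eq_dot] at e1 e2 e3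
  have E1 := dot_expand (h s) (h t) (h u)
  have E2 := dot_expand s t u
  linarith

lemma single_mem_ball {x₀ : Fin n → ℝ} {r : ℝ} (hr : 0 < r) (i : Fin n) :
    x₀ + (r / 2) • (Pi.single i 1 : Fin n → ℝ) ∈ Metric.ball x₀ r := by
  rw [Metric.mem_ball, dist_pi_lt_iff hr]
  intro k
  simp only [Pi.add_apply, Pi.smul_apply, Pi.single_apply, smul_eq_mul, Real.dist_eq,
    add_sub_cancel_left]
  split_ifs with hk
  · rw [mul_one, abs_of_pos (by linarith)]; linarith
  · simpa using hr

lemma local_affine {S : Set (Fin n → ℝ)} {h : (Fin n → ℝ) → (Fin n → ℝ)}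
    (hpres : ∀ s ∈ S, ∀ t ∈ S,
      ∑ i, (h s i - h t i) ^ 2 = ∑ i, (s i - t i) ^ 2)
    {x₀ : Fin n → ℝ} {r : ℝ} (hr : 0 < r) (hball : Metric.ball x₀ r ⊆ S) :
    ∃ A : Matrix (Fin n) (Fin n) ℝ, A ∈ Matrix.orthogonalGroup (Fin n) ℝ ∧
      ∀ y ∈ Metric.ball x₀ r, h y = A.mulVec y + (h x₀ - A.mulVec x₀) := by
  have hx₀ : x₀ ∈ S := hball (Metric.mem_ball_self hr)
  set p : Fin n → (Fin n → ℝ) := fun i => x₀ + (r / 2) • (Pi.single i 1 : Fin n → ℝ)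
    with hp_def
  have hp : ∀ i, p i ∈ S := fun i => hball (single_mem_ball hr i)
  have hpsub : ∀ i, p i - x₀ = (r / 2) • (Pi.single i 1 : Fin n → ℝ) := by
    intro i; simp [hp_def]
  set v : Fin n → (Fin n → ℝ) := fun i => (2 / r) • (h (p i) - h x₀) with hv_def
  have hr' : r ≠ 0 := ne_of_gt hr
  have hsingle : ∀ i j : Fin n,
      (Pi.single i 1 : Fin n → ℝ) ⬝ᵥ (Pi.single j 1 : Fin n → ℝ)
        = if i = j then 1 else 0 := by
    intro i j
    simp [dotProduct_single, Pi.single_apply, eq_comm]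
  have hvv : ∀ i j, v i ⬝ᵥ v j = if i = j then 1 else 0 := by
    intro i j
    rw [hv_def]
    simp only [smul_dotProduct, dotProduct_smul]
    rw [polar hpres (hp i) (hp j) hx₀, hpsub, hpsub]
    simp only [smul_dotProduct, dotProduct_smul, hsingle, smul_eq_mul]
    split_ifs <;> field_simp <;> ring
  set A : Matrix (Fin n) (Fin n) ℝ := Matrix.of fun k i => v i k with hA_def
  have hAt : Aᵀ * A = 1 := by
    ext i j
    rw [Matrix.mul_apply, Matrix.one_apply]
    simpa [Matrix.transpose_apply, dotProduct, hA_def] using hvv i j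
  have hAorth : A ∈ Matrix.orthogonalGroup (Fin n) ℝ := by
    rw [Matrix.mem_orthogonalGroup_iff']
    simpa [Matrix.star_eq_conjTranspose, Matrix.conjTranspose] using hAt
  refine ⟨A, hAorth, ?_⟩
  intro y hy
  have hyS : y ∈ S := hball hy
  set c : Fin n → ℝ := y - x₀ with hc_def
  set g : Fin n → ℝ := h y - h x₀ with hg_def
  have hgg : g ⬝ᵥ g = c ⬝ᵥ c := polar hpres hyS hyS hx₀
  have hgv : ∀ i, g ⬝ᵥ v i = c i := by
    intro i
    rw [hv_def]
    simp only [dotProduct_smul]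
    rw [polar hpres hyS (hp i) hx₀, hpsub]
    rw [dotProduct_smul]
    rw [show c ⬝ᵥ (Pi.single i 1 : Fin n → ℝ) = c i by simp [dotProduct_single]]
    field_simp
    ring_nf
    exact mul_inv_cancel_right₀ hr' (c i)
  have hvecMul : g ᵥ* A = c := by
    funext i
    rw [Matrix.vecMul, hA_def]
    exact hgv i
  have hgw : g ⬝ᵥ (A *ᵥ c) = c ⬝ᵥ c := by
    rw [dotProduct_mulVec, hvecMul]
  have hww : (A *ᵥ c) ⬝ᵥ (A *ᵥ c) = c ⬝ᵥ c := by
    rw [dotProduct_mulVec, ← Matrix.vecMul_transpose, Matrix.vecMul_vecMul, hAt,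
      Matrix.vecMul_one]
  have hzero : (g - A *ᵥ c) ⬝ᵥ (g - A *ᵥ c) = 0 := by
    simp only [sub_dotProduct, dotProduct_sub]
    rw [dotProduct_comm (A *ᵥ c) g] at *
    linarith [hgg, hgw, hww]
  have hge : g = A *ᵥ c := sub_eq_zero.mp (dotProduct_self_eq_zero.mp hzero)
  have : h y - h x₀ = A *ᵥ y - A *ᵥ x₀ := by
    rw [← Matrix.mulVec_sub]; exact hge
  funext k
  have := congrFun this k
  simp only [Pi.sub_apply] at this
  simp only [Pi.add_apply, Pi.sub_apply]
  linarith

lemma affine_unique {A A' : Matrix (Fin n) (Fin n) ℝ} {b b' : Fin n → ℝ}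
    {x₀ : Fin n → ℝ} {r : ℝ} (hr : 0 < r)
    (H : ∀ y ∈ Metric.ball x₀ r, A.mulVec y + b = A'.mulVec y + b') :
    A = A' ∧ b = b' := by
  have h0 := H x₀ (Metric.mem_ball_self hr)
  have hA : A = A' := by
    ext k i
    have hi := H _ (single_mem_ball hr i)
    rw [Matrix.mulVec_add, Matrix.mulVec_smul, Matrix.mulVec_add, Matrix.mulVec_smul] at hi
    have h1 := congrFun hi k
    have h2 := congrFun h0 k
    simp only [Pi.add_apply, Pi.smul_apply, Matrix.mulVec_single, mul_one, smul_eq_mul,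
      MulOpposite.op_one, one_smul, Matrix.col_apply] at h1 h2
    have h3 : r / 2 * A k i = r / 2 * A' k i := by linarith
    exact mul_left_cancel₀ (by positivity) h3
  refine ⟨hA, ?_⟩
  rw [hA] at h0
  exact add_left_cancel h0

end Aux

/-- Mankiewicz-type extension for the Euclidean metric: a map on an open
connected subset of ℝⁿ preserving Euclidean distances is the restriction of a
unique affine isometry `s ↦ A s + b` with `A` orthogonal. -/
theorem euclidean_isometry_extension {n : ℕ}
    (S : Set (Fin n → ℝ)) (hSopen : IsOpen S) (hSconn : IsConnected S)
    (h : (Fin n → ℝ) → (Fin n → ℝ))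
    (hpres : ∀ s ∈ S, ∀ t ∈ S,
      ∑ i, (h s i - h t i) ^ 2 = ∑ i, (s i - t i) ^ 2) :
    ∃! Ab : Matrix (Fin n) (Fin n) ℝ × (Fin n → ℝ),
      Ab.1 ∈ Matrix.orthogonalGroup (Fin n) ℝ ∧
      ∀ s ∈ S, h s = Ab.1.mulVec s + Ab.2 := by
  obtain ⟨⟨x₀, hx₀⟩, hconn⟩ := hSconn
  obtain ⟨r, hr, hball⟩ := Metric.isOpen_iff.mp hSopen x₀ hx₀
  obtain ⟨A, hAorth, hAball⟩ := local_affine hpres hr hball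
  set b : Fin n → ℝ := h x₀ - A.mulVec x₀ with hb
  set T : Set (Fin n → ℝ) :=
    {x | ∃ ρ > 0, Metric.ball x ρ ⊆ S ∧
      ∀ y ∈ Metric.ball x ρ, h y = A.mulVec y + b} with hT_def
  have hTopen : IsOpen T := by
    rw [Metric.isOpen_iff]
    rintro x ⟨ρ, hρ, hsub, hx⟩
    refine ⟨ρ, hρ, fun z hz => ?_⟩
    have hd : dist z x < ρ := hz
    refine ⟨ρ - dist z x, by linarith, ?_, ?_⟩
    · exact (Metric.ball_subset_ball' (by linarith)).trans hsub
    · exact fun y hy => hx y (Metric.ball_subset_ball' (by linarith) hy)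
  have hx₀T : x₀ ∈ T := ⟨r, hr, hball, fun y hy => by rw [hAball y hy]⟩
  have hclos : closure T ∩ S ⊆ T := by
    rintro x ⟨hxc, hxS⟩
    obtain ⟨ρ, hρ, hsub⟩ := Metric.isOpen_iff.mp hSopen x hxS
    obtain ⟨A', hA'orth, hA'ball⟩ := local_affine hpres hρ hsub
    obtain ⟨z, hzT, hzd⟩ := Metric.mem_closure_iff.mp hxc ρ hρ
    obtain ⟨σ, hσ, hσsub, hz⟩ := hzT
    set τ : ℝ := min σ (ρ - dist x z) with hτ_def
    have hτ : 0 < τ := lt_min hσ (by linarith)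
    have hsub1 : Metric.ball z τ ⊆ Metric.ball z σ :=
      Metric.ball_subset_ball (min_le_left _ _)
    have hsub2 : Metric.ball z τ ⊆ Metric.ball x ρ := by
      apply Metric.ball_subset_ball'
      have := min_le_right σ (ρ - dist x z)
      rw [dist_comm]
      linarith
    have Heq : ∀ y ∈ Metric.ball z τ,
        A'.mulVec y + (h x - A'.mulVec x) = A.mulVec y + b := by
      intro y hy
      rw [← hA'ball y (hsub2 hy), hz y (hsub1 hy)]
    obtain ⟨hAA, hbb⟩ := affine_unique hτ Heq
    refine ⟨ρ, hρ, hsub, fun y hy => ?_⟩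
    rw [hA'ball y hy, hbb, hAA]
  have hST : S ⊆ T :=
    hconn.subset_of_closure_inter_subset hTopen ⟨x₀, hx₀, hx₀T⟩ hclos
  refine ⟨⟨A, b⟩, ⟨hAorth, fun s hs => ?_⟩, ?_⟩
  · obtain ⟨ρ, hρ, _, hy⟩ := hST hs
    exact hy s (Metric.mem_ball_self hρ)
  · rintro ⟨A', b'⟩ ⟨_, hA'⟩
    have Heq : ∀ y ∈ Metric.ball x₀ r,
        A'.mulVec y + b' = A.mulVec y + b := by
      intro y hy
      have h1 := hA' y (hball hy)
      obtain ⟨ρ, hρ, _, hy2⟩ := hST (hball hy)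
      rw [← h1, hy2 y (Metric.mem_ball_self hρ)]
    obtain ⟨hAA, hbb⟩ := affine_unique hr Heq
    simp [Prod.ext_iff, hAA, hbb]
end

section
/- Let A be an invertible n×n real matrix with ‖Ax‖₁ = ‖x‖₁ for all x ∈ ℝⁿ, where ‖x‖₁ = Σᵢ |xᵢ|. Then A is a generalized permutation matrix with entries ±1 at its nonzero positions. -/
/-!
Testing the isometry on `e_j` shows that every column has ℓ¹ norm `1`. Testing it on
`e_j ± e_k` gives `∑ i, |A i j ± A i k| = 2 = ∑ i, (|A i j| + |A i k|)`, so the triangle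
inequality is an equality in every row for both signs, which forces `A i j * A i k = 0`.
Thus the column supports are nonempty and pairwise disjoint; since there are as many rows
as columns, each row and each column has exactly one nonzero entry, of absolute value `1`.
-/

open Finset

theorem mul_eq_zero_of_abs_add_eq_of_abs_sub_eq {a b : ℝ}
    (hadd : |a + b| = |a| + |b|) (hsub : |a - b| = |a| + |b|) : a * b = 0 := by
  have hsq : (a + b) ^ 2 = (a - b) ^ 2 := by rw [← sq_abs, hadd, ← hsub, sq_abs]
  linear_combination hsq / 4

namespace Matrix

section L1Isometry

variable {m n : Type*} [Fintype m] [Fintype n] [DecidableEq n] {A : Matrix m n ℝ}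
  (hiso : ∀ x : n → ℝ, ∑ i, |(A *ᵥ x) i| = ∑ j, |x j|)
include hiso

theorem sum_abs_col_eq_one_of_l1_isometry (j : n) : ∑ i, |A i j| = 1 := by
  simpa [Pi.single_apply, apply_ite abs] using hiso (Pi.single j 1)

theorem abs_add_mul_eq_of_l1_isometry {j k : n} (hjk : j ≠ k) {s : ℝ} (hs : |s| = 1) (i : m) :
    |A i j + s * A i k| = |A i j| + |A i k| := by
  have hsum : ∑ i, |A i j + s * A i k| = ∑ i, (|A i j| + |A i k|) := by
    have := hiso (Pi.single j 1 + Pi.single k s)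
    rw [Fintype.sum_eq_add j k hjk fun x hx => by simp [hx.1, hx.2]] at this
    simpa [mulVec_add, Pi.single_apply, hjk, hjk.symm, hs, sum_add_distrib,
      sum_abs_col_eq_one_of_l1_isometry hiso] using this
  refine (sum_eq_sum_iff_of_le fun i _ => ?_).1 hsum i (mem_univ i)
  simpa [abs_mul, hs] using abs_add_le (A i j) (s * A i k)

theorem mul_eq_zero_of_l1_isometry {j k : n} (hjk : j ≠ k) (i : m) : A i j * A i k = 0 :=
  mul_eq_zero_of_abs_add_eq_of_abs_sub_eq
    (by simpa using abs_add_mul_eq_of_l1_isometry hiso hjk (s := 1) (by simp) i)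
    (by simpa [sub_eq_add_neg] using abs_add_mul_eq_of_l1_isometry hiso hjk (s := -1) (by simp) i)

end L1Isometry

theorem existsUnique_ne_zero_of_col_nonzero_of_row_subsingleton {ι R : Type*} [Finite ι] [Zero R]
    {A : Matrix ι ι R} (hcol : ∀ j, ∃ i, A i j ≠ 0)
    (hrow : ∀ i j k, A i j ≠ 0 → A i k ≠ 0 → j = k) :
    (∀ i, ∃! j, A i j ≠ 0) ∧ (∀ j, ∃! i, A i j ≠ 0) := by
  choose f hf using hcol
  have hsurj : Function.Surjective f :=
    Finite.surjective_of_injective fun j k h => hrow _ _ _ (hf j) (h ▸ hf k)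
  refine ⟨fun i => ?_, fun j => ⟨f j, hf j, fun i hi => ?_⟩⟩
  · obtain ⟨j, rfl⟩ := hsurj i
    exact ⟨j, hf j, fun k hk => hrow _ _ _ hk (hf j)⟩
  · obtain ⟨k, rfl⟩ := hsurj i
    rw [hrow _ _ _ (hf k) hi]

end Matrix

theorem l1_isometry_is_signed_permutation_general {n : ℕ}
    (A : Matrix (Fin n) (Fin n) ℝ)
    (hiso : ∀ x : Fin n → ℝ, ∑ i, |A.mulVec x i| = ∑ i, |x i|) :
    (∀ i : Fin n, ∃! j : Fin n, A i j ≠ 0) ∧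
    (∀ j : Fin n, ∃! i : Fin n, A i j ≠ 0) ∧
    (∀ i j : Fin n, A i j ≠ 0 → A i j = 1 ∨ A i j = -1) := by
  have hcol_sum := Matrix.sum_abs_col_eq_one_of_l1_isometry hiso
  have hcol : ∀ j, ∃ i, A i j ≠ 0 := fun j => by
    by_contra! h
    simpa [h] using hcol_sum j
  have hrow : ∀ i j k, A i j ≠ 0 → A i k ≠ 0 → j = k := fun i j k hj hk =>
    by_contra fun hjk => mul_ne_zero hj hk (Matrix.mul_eq_zero_of_l1_isometry hiso hjk i)
  obtain ⟨hrows, hcols⟩ :=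
    Matrix.existsUnique_ne_zero_of_col_nonzero_of_row_subsingleton hcol hrow
  refine ⟨hrows, hcols, fun i j hij => ?_⟩
  have habs : |A i j| = 1 := by
    refine (hcol_sum j ▸ sum_eq_single i (fun i' _ hi' => ?_) (by simp)).symm
    rw [abs_eq_zero]
    by_contra h
    exact hi' ((hcols j).unique h hij)
  exact (abs_eq zero_le_one).1 habs

/-- An invertible matrix preserving the ℓ¹ norm is a generalized permutation
matrix whose nonzero entries are `±1`. -/
theorem l1_isometry_is_signed_permutation {n : ℕ}
    (A : Matrix (Fin n) (Fin n) ℝ) (hA : IsUnit A)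
    (hiso : ∀ x : Fin n → ℝ, ∑ i, |A.mulVec x i| = ∑ i, |x i|) :
    (∀ i : Fin n, ∃! j : Fin n, A i j ≠ 0) ∧
    (∀ j : Fin n, ∃! i : Fin n, A i j ≠ 0) ∧
    (∀ i j : Fin n, A i j ≠ 0 → A i j = 1 ∨ A i j = -1) :=
  l1_isometry_is_signed_permutation_general A hiso
end

section
/- Let d(x, y) = Σᵢ (|xᵢ − yᵢ|/σᵢ)^β on ℝⁿ with β ∈ (0, 2) ∪ (2, ∞) and σᵢ > 0, and let h(s) = A s + b be an affine bijection of ℝⁿ satisfying d(h(s), h(t)) = d(s, t) for all s, t. Then D A D⁻¹ is a generalized permutation matrix, where D = diag(1/σ₁, …, 1/σₙ); equivalently, h permutes, scales and sign-flips the coordinates up to the weights σᵢ. -/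
/-!
Conjugating by `D = diag(1/σᵢ)` turns `h - b` into a linear map `M` preserving
`S(w) = ∑ᵢ |wᵢ|^β`. For real `x, y` the parallelogram-type inequality
`|x + y|^β + |x - y|^β ≤ 2|x|^β + 2|y|^β` (reversed when `β > 2`) is strict unless
`x = 0` or `y = 0`; hence `S(u + v) + S(u - v) = 2 S(u) + 2 S(v)` holds exactly when
`u` and `v` have disjoint supports. Since `M` preserves `S` and is linear, it maps vectors
with disjoint supports to vectors with disjoint supports, so distinct columns of `M` have
disjoint supports. An invertible matrix whose rows each carry at most one nonzero entry is
a generalized permutation matrix.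
-/

open Real Finset Matrix

namespace Real

theorem self_mul_rpow_sub_one {x : ℝ} (hx : x ≠ 0) (q : ℝ) : x * x ^ (q - 1) = x ^ q := by
  rw [rpow_sub_one hx, mul_div_cancel₀ _ hx]

theorem rpow_add_lt_add_rpow {q a b : ℝ} (ha : 0 < a) (hb : 0 < b) (hq : q < 1) :
    (a + b) ^ q < a ^ q + b ^ q := by
  have hab : 0 < a + b := add_pos ha hb
  calc (a + b) ^ q = a * (a + b) ^ (q - 1) + b * (a + b) ^ (q - 1) := by
        rw [← add_mul, self_mul_rpow_sub_one hab.ne']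
    _ < a * a ^ (q - 1) + b * b ^ (q - 1) := by
        have hq' : q - 1 < 0 := by linarith
        exact add_lt_add (mul_lt_mul_of_pos_left (rpow_lt_rpow_of_neg ha (by linarith) hq') ha)
          (mul_lt_mul_of_pos_left (rpow_lt_rpow_of_neg hb (by linarith) hq') hb)
    _ = a ^ q + b ^ q := by rw [self_mul_rpow_sub_one ha.ne', self_mul_rpow_sub_one hb.ne']

theorem add_rpow_lt_rpow_add {q a b : ℝ} (ha : 0 < a) (hb : 0 < b) (hq : 1 < q) :
    a ^ q + b ^ q < (a + b) ^ q := by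
  have hab : 0 < a + b := add_pos ha hb
  calc a ^ q + b ^ q = a * a ^ (q - 1) + b * b ^ (q - 1) := by
        rw [self_mul_rpow_sub_one ha.ne', self_mul_rpow_sub_one hb.ne']
    _ < a * (a + b) ^ (q - 1) + b * (a + b) ^ (q - 1) := by
        have hq' : 0 < q - 1 := by linarith
        exact add_lt_add (mul_lt_mul_of_pos_left (rpow_lt_rpow ha.le (by linarith) hq') ha)
          (mul_lt_mul_of_pos_left (rpow_lt_rpow hb.le (by linarith) hq') hb)
    _ = (a + b) ^ q := by rw [← add_mul, self_mul_rpow_sub_one hab.ne']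

theorem abs_rpow_eq_sq_rpow (p x : ℝ) : |x| ^ p = (x ^ 2) ^ (p / 2) := by
  rw [← sq_abs, ← rpow_natCast |x| 2, ← rpow_mul (abs_nonneg x)]
  ring_nf

theorem abs_add_rpow_add_abs_sub_rpow_le_two_mul_sq_add_sq_rpow {p : ℝ} (hp0 : 0 ≤ p) (hp2 : p ≤ 2)
    (x y : ℝ) :
    |x + y| ^ p + |x - y| ^ p ≤ 2 * (x ^ 2 + y ^ 2) ^ (p / 2) := by
  have := (concaveOn_rpow (by linarith : 0 ≤ p / 2) (by linarith)).2
    (sq_nonneg (x + y)) (sq_nonneg (x - y)) (by norm_num : (0 : ℝ) ≤ 1 / 2)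
    (by norm_num : (0 : ℝ) ≤ 1 / 2) (by norm_num)
  rw [smul_eq_mul, smul_eq_mul, smul_eq_mul, smul_eq_mul,
    show 1 / 2 * (x + y) ^ 2 + 1 / 2 * (x - y) ^ 2 = x ^ 2 + y ^ 2 by ring] at this
  rw [abs_rpow_eq_sq_rpow p, abs_rpow_eq_sq_rpow p]
  linarith

theorem two_mul_sq_add_sq_rpow_le_abs_add_rpow_add_abs_sub_rpow {p : ℝ} (hp2 : 2 ≤ p)
    (x y : ℝ) :
    2 * (x ^ 2 + y ^ 2) ^ (p / 2) ≤ |x + y| ^ p + |x - y| ^ p := by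
  have := (convexOn_rpow (by linarith : 1 ≤ p / 2)).2
    (sq_nonneg (x + y)) (sq_nonneg (x - y)) (by norm_num : (0 : ℝ) ≤ 1 / 2)
    (by norm_num : (0 : ℝ) ≤ 1 / 2) (by norm_num)
  rw [smul_eq_mul, smul_eq_mul, smul_eq_mul, smul_eq_mul,
    show 1 / 2 * (x + y) ^ 2 + 1 / 2 * (x - y) ^ 2 = x ^ 2 + y ^ 2 by ring] at this
  rw [abs_rpow_eq_sq_rpow p, abs_rpow_eq_sq_rpow p]
  linarith

end Real

section Parallelogram

variable {p : ℝ}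

theorem abs_add_rpow_add_abs_sub_rpow_le_of_le_two (hp0 : 0 ≤ p) (hp2 : p ≤ 2) (x y : ℝ) :
    |x + y| ^ p + |x - y| ^ p ≤ 2 * |x| ^ p + 2 * |y| ^ p := by
  have hsub := rpow_add_le_add_rpow (sq_nonneg x) (sq_nonneg y) (by linarith : 0 ≤ p / 2)
    (by linarith)
  rw [abs_rpow_eq_sq_rpow p x, abs_rpow_eq_sq_rpow p y]
  linarith [abs_add_rpow_add_abs_sub_rpow_le_two_mul_sq_add_sq_rpow hp0 hp2 x y]

theorem abs_add_rpow_add_abs_sub_rpow_lt_of_lt_two (hp0 : 0 ≤ p) (hp2 : p < 2) {x y : ℝ}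
    (hx : x ≠ 0) (hy : y ≠ 0) :
    |x + y| ^ p + |x - y| ^ p < 2 * |x| ^ p + 2 * |y| ^ p := by
  have hsub := rpow_add_lt_add_rpow (pow_two_pos_of_ne_zero hx) (pow_two_pos_of_ne_zero hy)
    (by linarith : p / 2 < 1)
  rw [abs_rpow_eq_sq_rpow p x, abs_rpow_eq_sq_rpow p y]
  linarith [abs_add_rpow_add_abs_sub_rpow_le_two_mul_sq_add_sq_rpow hp0 hp2.le x y]

theorem le_abs_add_rpow_add_abs_sub_rpow_of_two_le (hp2 : 2 ≤ p) (x y : ℝ) :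
    2 * |x| ^ p + 2 * |y| ^ p ≤ |x + y| ^ p + |x - y| ^ p := by
  have hsuper := add_rpow_le_rpow_add (sq_nonneg x) (sq_nonneg y) (by linarith : 1 ≤ p / 2)
  rw [abs_rpow_eq_sq_rpow p x, abs_rpow_eq_sq_rpow p y]
  linarith [two_mul_sq_add_sq_rpow_le_abs_add_rpow_add_abs_sub_rpow hp2 x y]

theorem lt_abs_add_rpow_add_abs_sub_rpow_of_two_lt (hp2 : 2 < p) {x y : ℝ}
    (hx : x ≠ 0) (hy : y ≠ 0) :
    2 * |x| ^ p + 2 * |y| ^ p < |x + y| ^ p + |x - y| ^ p := by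
  have hsuper := add_rpow_lt_rpow_add (pow_two_pos_of_ne_zero hx) (pow_two_pos_of_ne_zero hy)
    (by linarith : 1 < p / 2)
  rw [abs_rpow_eq_sq_rpow p x, abs_rpow_eq_sq_rpow p y]
  linarith [two_mul_sq_add_sq_rpow_le_abs_add_rpow_add_abs_sub_rpow hp2.le x y]

theorem sum_abs_add_rpow_add_sum_abs_sub_rpow_eq_iff {ι : Type*} [Fintype ι] (hp0 : 0 < p)
    (hp2 : p ≠ 2) {u v : ι → ℝ} :
    ∑ i, |u i + v i| ^ p + ∑ i, |u i - v i| ^ p = 2 * ∑ i, |u i| ^ p + 2 * ∑ i, |v i| ^ p ↔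
      ∀ i, u i = 0 ∨ v i = 0 := by
  rw [← sum_add_distrib, mul_sum, mul_sum, ← sum_add_distrib]
  constructor
  · intro h i
    by_contra! hne
    rcases hp2.lt_or_gt with hlt | hgt
    · refine (sum_lt_sum (fun j _ => abs_add_rpow_add_abs_sub_rpow_le_of_le_two hp0.le hlt.le _ _)
        ⟨i, mem_univ i, abs_add_rpow_add_abs_sub_rpow_lt_of_lt_two hp0.le hlt hne.1 hne.2⟩).ne h
    · refine (sum_lt_sum (fun j _ => le_abs_add_rpow_add_abs_sub_rpow_of_two_le hgt.le _ _)
        ⟨i, mem_univ i, lt_abs_add_rpow_add_abs_sub_rpow_of_two_lt hgt hne.1 hne.2⟩).ne' h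
  · intro h
    refine sum_congr rfl fun i _ => ?_
    rcases h i with h | h <;> simp [h, zero_rpow hp0.ne', two_mul]

end Parallelogram

namespace Matrix

def IsGeneralizedPermutation {n R : Type*} [Zero R] (M : Matrix n n R) : Prop :=
  (∀ i, ∃! j, M i j ≠ 0) ∧ ∀ j, ∃! i, M i j ≠ 0

variable {m n R : Type*} [Fintype m] [Fintype n]

section SumRpow

variable {p : ℝ}

theorem mulVec_eq_zero_or_eq_zero_of_sum_rpow_eq (hp0 : 0 < p) (hp2 : p ≠ 2)
    {M : Matrix m n ℝ} (hM : ∀ w, ∑ i, |(M *ᵥ w) i| ^ p = ∑ j, |w j| ^ p) {u v : n → ℝ}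
    (huv : ∀ j, u j = 0 ∨ v j = 0) (i : m) :
    (M *ᵥ u) i = 0 ∨ (M *ᵥ v) i = 0 := by
  refine (sum_abs_add_rpow_add_sum_abs_sub_rpow_eq_iff hp0 hp2).1 ?_ i
  have hadd : ∀ i, (M *ᵥ u) i + (M *ᵥ v) i = (M *ᵥ (u + v)) i := by simp [mulVec_add]
  have hsub : ∀ i, (M *ᵥ u) i - (M *ᵥ v) i = (M *ᵥ (u - v)) i := by simp [mulVec_sub]
  simp only [hadd, hsub, hM]
  exact (sum_abs_add_rpow_add_sum_abs_sub_rpow_eq_iff hp0 hp2).2 huv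

theorem eq_zero_or_eq_zero_of_sum_rpow_mulVec_eq [DecidableEq n] (hp0 : 0 < p) (hp2 : p ≠ 2)
    {M : Matrix m n ℝ} (hM : ∀ w, ∑ i, |(M *ᵥ w) i| ^ p = ∑ j, |w j| ^ p) (i : m) {j k : n}
    (hjk : j ≠ k) : M i j = 0 ∨ M i k = 0 := by
  have hdisj : ∀ l, (Pi.single j 1 : n → ℝ) l = 0 ∨ (Pi.single k 1 : n → ℝ) l = 0 := by
    intro l
    rcases eq_or_ne l j with rfl | hl
    · simp [hjk]
    · simp [hl]
  simpa [mulVec_single_one] using mulVec_eq_zero_or_eq_zero_of_sum_rpow_eq hp0 hp2 hM hdisj i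

theorem sum_abs_diagonal_mul_mul_diagonal_mulVec_rpow [DecidableEq n] {σ : n → ℝ}
    (hσ : ∀ i, 0 < σ i) {A : Matrix n n ℝ}
    (hA : ∀ s, ∑ i, (|(A *ᵥ s) i| / σ i) ^ p = ∑ i, (|s i| / σ i) ^ p) (w : n → ℝ) :
    ∑ i, |(((diagonal fun k => (σ k)⁻¹) * A * diagonal σ) *ᵥ w) i| ^ p = ∑ i, |w i| ^ p := by
  have hDw : diagonal σ *ᵥ w = fun j => σ j * w j := funext (mulVec_diagonal σ w)
  have hσ' : ∀ i, σ i ≠ 0 := fun i => (hσ i).ne'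
  simpa [← mulVec_mulVec, hDw, mulVec_diagonal, abs_mul, abs_div, abs_of_pos (hσ _), hσ',
    inv_mul_eq_div] using hA (fun j => σ j * w j)

end SumRpow

theorem isGeneralizedPermutation_of_isUnit [DecidableEq n] [CommRing R] [Nontrivial R]
    {M : Matrix n n R} (hM : IsUnit M) (hrow : ∀ i j k, j ≠ k → M i j = 0 ∨ M i k = 0) :
    M.IsGeneralizedPermutation := by
  have hdet : M.det ≠ 0 := ((isUnit_iff_isUnit_det M).1 hM).ne_zero
  have hrow_ne : ∀ i, ∃ j, M i j ≠ 0 := fun i => by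
    by_contra! h
    exact hdet (det_eq_zero_of_row_eq_zero i h)
  have hcol_ne : ∀ j, ∃ i, M i j ≠ 0 := fun j => by
    by_contra! h
    exact hdet (det_eq_zero_of_column_eq_zero j h)
  have hunique : ∀ {i j k}, M i j ≠ 0 → M i k ≠ 0 → j = k := fun hj hk => by
    by_contra hjk
    exact (hrow _ _ _ hjk).elim hj hk
  choose φ hφ using hrow_ne
  have hφ_surj : Function.Surjective φ := fun j =>
    let ⟨i, hi⟩ := hcol_ne j
    ⟨i, hunique (hφ i) hi⟩
  have hφ_inj : Function.Injective φ := Finite.injective_iff_surjective.2 hφ_surj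
  refine ⟨fun i => ⟨φ i, hφ i, fun j hj => hunique hj (hφ i)⟩, fun j => ?_⟩
  obtain ⟨i, rfl⟩ := hφ_surj j
  exact ⟨i, hφ i, fun i' hi' => hφ_inj (hunique (hφ i') hi')⟩

end Matrix

/-- If an affine bijection `h(s) = A s + b` preserves the weighted β-power
distance `d(x,y) = ∑ᵢ (|xᵢ − yᵢ| / σᵢ)^β` with `β ∈ (0,2) ∪ (2,∞)` and
`σᵢ > 0`, then `D A D⁻¹` (with `D = diag(1/σᵢ)`) is a generalized permutation
matrix. -/
theorem affine_beta_isometry_is_generalized_permutation {n : ℕ}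
    (β : ℝ) (hβ0 : 0 < β) (hβ2 : β ≠ 2)
    (σ : Fin n → ℝ) (hσ : ∀ i, 0 < σ i)
    (d : (Fin n → ℝ) → (Fin n → ℝ) → ℝ)
    (hd : ∀ x y, d x y = ∑ i, (|x i - y i| / σ i) ^ β)
    (A : Matrix (Fin n) (Fin n) ℝ) (hA : IsUnit A) (b : Fin n → ℝ)
    (h : (Fin n → ℝ) → (Fin n → ℝ))
    (hh : ∀ s, h s = A.mulVec s + b)
    (hiso : ∀ s t, d (h s) (h t) = d s t) :
    (∀ i : Fin n,
      ∃! j : Fin n,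
        (Matrix.diagonal (fun k => (σ k)⁻¹) * A * Matrix.diagonal σ) i j ≠ 0) ∧
    (∀ j : Fin n,
      ∃! i : Fin n,
        (Matrix.diagonal (fun k => (σ k)⁻¹) * A * Matrix.diagonal σ) i j ≠ 0) := by
  set M := diagonal (fun k => (σ k)⁻¹) * A * diagonal σ
  have hAw : ∀ s, ∑ i, (|(A *ᵥ s) i| / σ i) ^ β = ∑ i, (|s i| / σ i) ^ β := fun s => by
    simpa [hd, hh] using hiso s 0
  have hM : ∀ w, ∑ i, |(M *ᵥ w) i| ^ β = ∑ i, |w i| ^ β :=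
    sum_abs_diagonal_mul_mul_diagonal_mulVec_rpow hσ hAw
  have hMunit : IsUnit M := by
    have hσunit : IsUnit σ := Pi.isUnit_iff.2 fun k => (hσ k).ne'.isUnit
    exact ((isUnit_diagonal.2 hσunit.inv).mul hA).mul (isUnit_diagonal.2 hσunit)
  exact isGeneralizedPermutation_of_isUnit hMunit fun i j k hjk =>
    eq_zero_or_eq_zero_of_sum_rpow_mulVec_eq hβ0 hβ2 hM i hjk
end
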